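/- arXiv:1903.03239 — 4 statements merged into one kernel-verified Lean document; each statement's English description precedes it below -/
import Mathlib

section
/- Let f : ℝ → ℝ be a differentiable convex function with extreme point t* (f'(t*) = 0), let ρ > 0, 0 < α < 1, and let (t_k) satisfy the FOGM recurrence t_{k+2} = t_{k+1} − ρ·f'(t_{k+1})·|t_{k+1} − t_k|^{1−α} for all k ≥ 1, with t_2 ≠ t_1 and t_k ≠ t* for all k. Then at least one of the two switching conditions must occur at some step: there exists k ≥ 2 such that |t_k − t_{k−1}| < 1 or f'(t_2)·f'(t_k) < 0. -/
/-- For the FOGM with `0 < α < 1` on a differentiable convex `f`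
with extreme point `t*`, at least one of the switching conditions
`|t_k − t_{k−1}| < 1` or `f'(t_2)·f'(t_k) < 0` must occur at some step `k ≥ 2`. -/
theorem fogm_switching_condition_occurs
    (f : ℝ → ℝ) (hdiff : Differentiable ℝ f) (hconv : ConvexOn ℝ Set.univ f)
    (ts : ℝ) (hts : deriv f ts = 0)
    (ρ α : ℝ) (hρ : 0 < ρ) (hα₁ : 0 < α) (hα₂ : α < 1)
    (t : ℕ → ℝ)
    (hrec : ∀ k : ℕ, 1 ≤ k →
      t (k + 2) = t (k + 1) - ρ * deriv f (t (k + 1)) * |t (k + 1) - t k| ^ (1 - α))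
    (hstart : t 2 ≠ t 1)
    (hne : ∀ k : ℕ, t k ≠ ts) :
    ∃ k : ℕ, 2 ≤ k ∧ (|t k - t (k - 1)| < 1 ∨ deriv f (t 2) * deriv f (t k) < 0) := by
  by_contra h
  push_neg at h
  -- negation: for all k ≥ 2, 1 ≤ |t k - t (k-1)| and 0 ≤ f'(t2) * f'(tk)
  have hbig : ∀ k : ℕ, 2 ≤ k → 1 ≤ |t k - t (k - 1)| := fun k hk => (h k hk).1
  have hsgn : ∀ k : ℕ, 2 ≤ k → 0 ≤ deriv f (t 2) * deriv f (t k) := fun k hk => (h k hk).2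
  have hmono : MonotoneOn (deriv f) Set.univ :=
    hconv.monotoneOn_deriv (fun x _ => hdiff x)
  -- derivative at each iterate (k ≥ 2) is nonzero
  have hrec' : ∀ j : ℕ, 2 ≤ j →
      t (j + 1) = t j - ρ * deriv f (t j) * |t j - t (j - 1)| ^ (1 - α) := by
    intro j hj
    obtain ⟨m, rfl⟩ := Nat.exists_eq_add_of_le hj
    have := hrec (1 + m) (by omega)
    have e1 : 1 + m + 2 = 2 + m + 1 := by omega
    have e2 : 1 + m + 1 = 2 + m := by omega
    have e3 : 2 + m - 1 = 1 + m := by omega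
    rw [e1, e2] at this
    rw [this, e3]
  have hdne : ∀ j : ℕ, 2 ≤ j → deriv f (t j) ≠ 0 := by
    intro j hj hd0
    have h1 := hrec' j hj
    rw [hd0] at h1
    have : t (j + 1) = t j := by rw [h1]; ring
    have := hbig (j + 1) (by omega)
    simp only [Nat.add_sub_cancel] at this
    rw [‹t (j + 1) = t j›] at this
    simp only [sub_self, abs_zero] at this
    linarith
  have h2ne := hdne 2 le_rfl
  rcases lt_or_gt_of_ne h2ne with hneg | hpos
  · -- f'(t2) < 0 : all f'(tj) < 0, sequence increases by ≥ 1 each step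
    have hall : ∀ j : ℕ, 2 ≤ j → deriv f (t j) < 0 := by
      intro j hj
      have := hsgn j hj
      have hne' := hdne j hj
      rcases lt_or_gt_of_ne hne' with h' | h'
      · exact h'
      · nlinarith
    have hstep : ∀ j : ℕ, 2 ≤ j → t j + 1 ≤ t (j + 1) := by
      intro j hj
      have h1 := hrec' j hj
      have h2 : 0 ≤ |t j - t (j - 1)| ^ (1 - α) := by positivity
      have h3 : t j ≤ t (j + 1) := by
        rw [h1]; nlinarith [mul_nonneg (mul_nonneg hρ.le h2) (neg_nonneg.mpr (hall j hj).le)]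
      have h4 := hbig (j + 1) (by omega)
      simp only [Nat.add_sub_cancel] at h4
      rw [abs_of_nonneg (by linarith)] at h4
      linarith
    have hgrow : ∀ n : ℕ, t 2 + n ≤ t (2 + n) := by
      intro n
      induction n with
      | zero => simp
      | succ m ih =>
        have := hstep (2 + m) (by omega)
        push_cast
        have e : 2 + (m + 1) = (2 + m) + 1 := by omega
        rw [e]
        push_cast at ih
        linarith
    obtain ⟨n, hn⟩ := exists_nat_gt (ts - t 2)
    have : ts < t (2 + n) := by have := hgrow n; linarith
    have hle : deriv f ts ≤ deriv f (t (2 + n)) :=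
      hmono (Set.mem_univ _) (Set.mem_univ _) this.le
    have := hall (2 + n) (by omega)
    rw [hts] at hle
    linarith
  · -- f'(t2) > 0 : all f'(tj) > 0, sequence decreases by ≥ 1 each step
    have hall : ∀ j : ℕ, 2 ≤ j → 0 < deriv f (t j) := by
      intro j hj
      have := hsgn j hj
      have hne' := hdne j hj
      rcases lt_or_gt_of_ne hne' with h' | h'
      · nlinarith
      · exact h'
    have hstep : ∀ j : ℕ, 2 ≤ j → t (j + 1) ≤ t j - 1 := by
      intro j hj
      have h1 := hrec' j hj
      have h2 : 0 ≤ |t j - t (j - 1)| ^ (1 - α) := by positivity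
      have h3 : t (j + 1) ≤ t j := by
        rw [h1]; nlinarith [mul_nonneg (mul_nonneg hρ.le h2) (hall j hj).le]
      have h4 := hbig (j + 1) (by omega)
      simp only [Nat.add_sub_cancel] at h4
      rw [abs_of_nonpos (by linarith)] at h4
      linarith
    have hgrow : ∀ n : ℕ, t (2 + n) ≤ t 2 - n := by
      intro n
      induction n with
      | zero => simp
      | succ m ih =>
        have := hstep (2 + m) (by omega)
        push_cast
        have e : 2 + (m + 1) = (2 + m) + 1 := by omega
        rw [e]
        push_cast at ih
        linarith
    obtain ⟨n, hn⟩ := exists_nat_gt (t 2 - ts)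
    have : t (2 + n) < ts := by have := hgrow n; linarith
    have hle : deriv f (t (2 + n)) ≤ deriv f ts :=
      hmono (Set.mem_univ _) (Set.mem_univ _) this.le
    have := hall (2 + n) (by omega)
    rw [hts] at hle
    linarith
end

section
/- Let f : ℝ → ℝ be a differentiable convex function with extreme point t* (f'(t*) = 0), and suppose there exist μ > 0, 0 < p < 1, and R > 0 such that |f'(x) − f'(y)| ≤ μ|x − y|^p for all x, y with |x − t*| > R and |y − t*| > R. Then for arbitrary step size ρ > 0, the conventional gradient method sequence t_{k+1} = t_k − ρ·f'(t_k) never goes to infinity: there exists M > 0 such that |t_k − t*| ≤ M for all k. -/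
/-- For a differentiable convex `f` which satisfies a `p`-order
Lipschitz gradient condition with `0 < p < 1` outside a ball of radius `R`
around the extreme point `t*`, the conventional gradient method never goes to
infinity, for arbitrary step size `ρ > 0`. -/
theorem gm_never_diverges_p_order_lipschitz
    (f : ℝ → ℝ) (hdiff : Differentiable ℝ f) (hconv : ConvexOn ℝ Set.univ f)
    (ts : ℝ) (hts : deriv f ts = 0)
    (μ p R : ℝ) (hμ : 0 < μ) (hp₁ : 0 < p) (hp₂ : p < 1) (hR : 0 < R)
    (hlip : ∀ x y : ℝ, R < |x - ts| → R < |y - ts| →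
      |deriv f x - deriv f y| ≤ μ * |x - y| ^ p)
    (ρ : ℝ) (hρ : 0 < ρ)
    (t : ℕ → ℝ)
    (hrec : ∀ k : ℕ, t (k + 1) = t k - ρ * deriv f (t k)) :
    ∃ M : ℝ, 0 < M ∧ ∀ k : ℕ, |t k - ts| ≤ M := by
  have hmono : Monotone (deriv f) := by
    intro x y hxy
    rcases eq_or_lt_of_le hxy with rfl | hxy
    · exact le_rfl
    · exact le_trans
        (hconv.deriv_le_slope (Set.mem_univ x) (Set.mem_univ y) hxy (hdiff x))
        (hconv.slope_le_deriv (Set.mem_univ x) (Set.mem_univ y) hxy (hdiff y))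
  set B : ℝ := |deriv f (ts - 2*R)| + |deriv f (ts + 2*R)| with hB
  have hB0 : 0 ≤ B := by positivity
  have hBbound : ∀ x : ℝ, |x - ts| ≤ 2*R → |deriv f x| ≤ B := by
    intro x hx
    rw [abs_le] at hx
    have h1 : deriv f (ts - 2*R) ≤ deriv f x := hmono (by linarith)
    have h2 : deriv f x ≤ deriv f (ts + 2*R) := hmono (by linarith)
    rw [abs_le]
    constructor
    · have := neg_abs_le (deriv f (ts - 2*R))
      nlinarith [abs_nonneg (deriv f (ts + 2*R))]
    · have := le_abs_self (deriv f (ts + 2*R))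
      nlinarith [abs_nonneg (deriv f (ts - 2*R))]
  have hglob : ∀ x : ℝ, |deriv f x| ≤ B + μ * |x - ts| ^ p := by
    intro x
    have hpow0 : (0:ℝ) ≤ μ * |x - ts| ^ p := by positivity
    rcases le_or_gt (|x - ts|) (2*R) with hcase | hcase
    · linarith [hBbound x hcase]
    · rcases le_or_gt ts x with hside | hside
      · set y := ts + 2*R with hy
        have habs : |x - ts| = x - ts := abs_of_nonneg (by linarith)
        rw [habs] at hcase
        have hyd : |y - ts| = 2*R := by
          rw [hy, show ts + 2*R - ts = 2*R by ring, abs_of_pos (by linarith)]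
        have hxy : |x - y| ≤ |x - ts| := by
          rw [habs, hy, abs_of_nonneg (by linarith)]
          linarith
        have h1 := hlip x y (by rw [habs]; linarith) (by rw [hyd]; linarith)
        have h2 : |deriv f x| ≤ |deriv f x - deriv f y| + |deriv f y| := by
          calc |deriv f x| = |(deriv f x - deriv f y) + deriv f y| := by ring_nf
            _ ≤ _ := abs_add_le _ _
        have h3 : |deriv f y| ≤ B := hBbound y (le_of_eq hyd)
        have h4 : μ * |x - y| ^ p ≤ μ * |x - ts| ^ p :=
          mul_le_mul_of_nonneg_left (Real.rpow_le_rpow (abs_nonneg _) hxy hp₁.le) hμ.le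
        linarith
      · set y := ts - 2*R with hy
        have habs : |x - ts| = ts - x := by rw [abs_of_neg (by linarith)]; ring
        rw [habs] at hcase
        have hyd : |y - ts| = 2*R := by
          rw [hy, show ts - 2*R - ts = -(2*R) by ring, abs_neg, abs_of_pos (by linarith)]
        have hxy : |x - y| ≤ |x - ts| := by
          rw [habs, hy, abs_of_nonpos (by linarith)]
          linarith
        have h1 := hlip x y (by rw [habs]; linarith) (by rw [hyd]; linarith)
        have h2 : |deriv f x| ≤ |deriv f x - deriv f y| + |deriv f y| := by
          calc |deriv f x| = |(deriv f x - deriv f y) + deriv f y| := by ring_nf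
            _ ≤ _ := abs_add_le _ _
        have h3 : |deriv f y| ≤ B := hBbound y (le_of_eq hyd)
        have h4 : μ * |x - y| ^ p ≤ μ * |x - ts| ^ p :=
          mul_le_mul_of_nonneg_left (Real.rpow_le_rpow (abs_nonneg _) hxy hp₁.le) hμ.le
        linarith
  set M : ℝ := max (max 1 (|t 0 - ts|)) (max ((2*ρ*μ) ^ (1/(1-p))) (2*ρ*B)) with hM
  have hM1 : (1:ℝ) ≤ M := le_trans (le_max_left _ _) (le_max_left _ _)
  have hMpos : 0 < M := lt_of_lt_of_le one_pos hM1
  refine ⟨M, hMpos, ?_⟩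
  have hkey : ρ * (B + μ * M ^ p) ≤ M := by
    have h1 : ρ * B ≤ M / 2 := by
      have : 2*ρ*B ≤ M := le_trans (le_max_right _ _) (le_max_right _ _)
      nlinarith
    have h2 : ρ * (μ * M ^ p) ≤ M / 2 := by
      have hMc : (2*ρ*μ) ^ (1/(1-p)) ≤ M := le_trans (le_max_left _ _) (le_max_right _ _)
      have h1p : 0 < 1 - p := by linarith
      have heq : ((2*ρ*μ) ^ (1/(1-p))) ^ (1-p) = 2*ρ*μ := by
        rw [← Real.rpow_mul (by positivity), one_div, inv_mul_cancel₀ h1p.ne', Real.rpow_one]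
      have hstep : 2*ρ*μ ≤ M ^ (1-p) :=
        heq ▸ Real.rpow_le_rpow (Real.rpow_nonneg (by positivity) _) hMc h1p.le
      have hMp : M ^ p * M ^ (1-p) = M := by
        rw [← Real.rpow_add hMpos]; norm_num
      nlinarith [Real.rpow_pos_of_pos hMpos p, Real.rpow_pos_of_pos hMpos (1-p)]
    nlinarith
  intro k
  induction k with
  | zero => exact le_trans (le_max_right _ _) (le_max_left _ _)
  | succ k ih =>
    rw [hrec k]
    set a := t k - ts with ha
    set g := deriv f (t k) with hg
    have hgb : |g| ≤ B + μ * M ^ p := by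
      have h0 := hglob (t k)
      have h4 : μ * |a| ^ p ≤ μ * M ^ p :=
        mul_le_mul_of_nonneg_left (Real.rpow_le_rpow (abs_nonneg _) ih hp₁.le) hμ.le
      rw [← ha] at h0
      linarith
    have hrg : ρ * |g| ≤ M := le_trans (by nlinarith [abs_nonneg g]) hkey
    have habM : |a| ≤ M := ih
    have haM : -M ≤ a ∧ a ≤ M := abs_le.mp habM
    rcases le_or_gt ts (t k) with hside | hside
    · have hg0 : 0 ≤ g := by rw [hg, ← hts]; exact hmono hside
      have hgr : ρ * g ≤ M := by rwa [abs_of_nonneg hg0] at hrg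
      rw [show t k - ρ * g - ts = a - ρ * g by rw [ha]; ring, abs_le]
      constructor
      · nlinarith [haM.1, hρ.le]
      · nlinarith [haM.2, hρ.le]
    · have hg0 : g ≤ 0 := by rw [hg, ← hts]; exact hmono hside.le
      have hgr : -(ρ * g) ≤ M := by
        rw [abs_of_nonpos hg0] at hrg; linarith
      rw [show t k - ρ * g - ts = a - ρ * g by rw [ha]; ring, abs_le]
      constructor
      · nlinarith [haM.1, hρ.le]
      · nlinarith [haM.2, hρ.le]
end

section
/- Let f : ℝ → ℝ be a differentiable convex function with extreme point t* (f'(t*) = 0), and suppose f is p-order strongly convex around the extreme point with 0 < p < 1: there exist λ > 0 and r > 0 such that |f'(x) − f'(t*)| ≥ λ|x − t*|^p for all x with |x − t*| ≤ r. Let ρ > 0 and let (t_k) be the conventional gradient method sequence t_{k+1} = t_k − ρ·f'(t_k) with t_k ≠ t* for every k. Then (t_k) does not converge asymptotically to the extreme point: it is not the case that t_k → t* as k → ∞. -/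
/-- If a differentiable convex `f` is `p`-order strongly convex
around its extreme point `t*` with `0 < p < 1`, then the conventional gradient
method (never hitting `t*`) does not converge asymptotically to `t*`. -/
theorem gm_no_asymptotic_convergence_local_p_order_strong_convex
    (f : ℝ → ℝ) (hdiff : Differentiable ℝ f) (hconv : ConvexOn ℝ Set.univ f)
    (ts : ℝ) (hts : deriv f ts = 0)
    (lam p r : ℝ) (hlam : 0 < lam) (hp₁ : 0 < p) (hp₂ : p < 1) (hr : 0 < r)
    (hstrong : ∀ x : ℝ, |x - ts| ≤ r → lam * |x - ts| ^ p ≤ |deriv f x - deriv f ts|)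
    (ρ : ℝ) (hρ : 0 < ρ)
    (t : ℕ → ℝ)
    (hrec : ∀ k : ℕ, t (k + 1) = t k - ρ * deriv f (t k))
    (hne : ∀ k : ℕ, t k ≠ ts) :
    ¬ Filter.Tendsto t Filter.atTop (nhds ts) := by
  intro h
  set q : ℝ := 1 - p with hqdef
  have hq0 : 0 < q := by simp [hqdef]; linarith
  have hc : 0 < ρ * lam / 2 := by positivity
  set δ : ℝ := min r ((ρ * lam / 2) ^ (1/q)) with hδdef
  have hδ0 : 0 < δ := lt_min hr (Real.rpow_pos_of_pos hc _)
  -- key step: inside the ball of radius δ, distance to ts is nondecreasing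
  have key : ∀ k, |t k - ts| ≤ δ → |t k - ts| ≤ |t (k+1) - ts| := by
    intro k hk
    set d : ℝ := |t k - ts| with hddef
    have hd0 : 0 < d := abs_pos.mpr (sub_ne_zero.mpr (hne k))
    have hr' : d ≤ r := hk.trans (min_le_left _ _)
    have h1 : lam * d ^ p ≤ |deriv f (t k)| := by
      have := hstrong (t k) hr'
      simpa [hts] using this
    have h2 : d ^ q ≤ ρ * lam / 2 := by
      calc d ^ q ≤ ((ρ * lam / 2) ^ (1/q)) ^ q :=
            Real.rpow_le_rpow (abs_nonneg _) (hk.trans (min_le_right _ _)) hq0.le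
        _ = (ρ * lam / 2) ^ ((1/q) * q) := (Real.rpow_mul hc.le _ _).symm
        _ = ρ * lam / 2 := by
            rw [one_div, inv_mul_cancel₀ hq0.ne', Real.rpow_one]
    have hsplit : d = d ^ p * d ^ q := by
      rw [← Real.rpow_add hd0]
      simp [hqdef]
    have h3 : 2 * d ≤ ρ * lam * d ^ p := by
      have hdp : 0 ≤ d ^ p := Real.rpow_nonneg hd0.le _
      calc 2 * d = 2 * (d ^ p * d ^ q) := by rw [← hsplit]
        _ ≤ 2 * (d ^ p * (ρ * lam / 2)) := by nlinarith
        _ = ρ * lam * d ^ p := by ring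
    have h4 : ρ * lam * d ^ p ≤ ρ * |deriv f (t k)| := by
      have := mul_le_mul_of_nonneg_left h1 hρ.le
      linarith [this]
    have h5 : |ρ * deriv f (t k)| = ρ * |deriv f (t k)| := by
      rw [abs_mul, abs_of_pos hρ]
    calc d ≤ ρ * |deriv f (t k)| - d := by linarith
      _ = |ρ * deriv f (t k)| - |t k - ts| := by rw [h5, ← hddef]
      _ ≤ |ρ * deriv f (t k) - (t k - ts)| := abs_sub_abs_le_abs_sub _ _
      _ = |t (k+1) - ts| := by rw [hrec k, abs_sub_comm]; congr 1; ring
  have htend := Metric.tendsto_atTop.mp h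
  obtain ⟨N, hN⟩ := htend δ hδ0
  have hNd : ∀ k, N ≤ k → |t k - ts| ≤ δ := by
    intro k hk
    have := hN k hk
    rw [Real.dist_eq] at this
    linarith
  have mono : ∀ k, N ≤ k → |t N - ts| ≤ |t k - ts| := by
    intro k hk
    induction k, hk using Nat.le_induction with
    | base => exact le_refl _
    | succ n hn ih => exact ih.trans (key n (hNd n hn))
  have hN0 : 0 < |t N - ts| := abs_pos.mpr (sub_ne_zero.mpr (hne N))
  obtain ⟨M, hM⟩ := htend _ hN0
  have hk := hM (max N M) (le_max_right _ _)
  rw [Real.dist_eq] at hk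
  have := mono (max N M) (le_max_left _ _)
  linarith
end

section
/- Let f : ℝ → ℝ be differentiable with continuous derivative f', let ρ > 0 and 1 < α < 2, and let (t_k) satisfy the FOGM recurrence t_{k+2} = t_{k+1} − ρ·f'(t_{k+1})·|t_{k+1} − t_k|^{1−α} for all k, with t_{k+1} ≠ t_k for every k. If the sequence (t_k) converges to a limit L, then f'(L) = 0; in particular, for a convex f with unique extreme point t* (the unique zero of f'), any convergent FOGM sequence converges to t*. -/
/-- If an FOGM sequence (with `1 < α < 2`, nondegenerate steps)
for a continuously differentiable `f` converges to some limit `L`, then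
`f'(L) = 0`; in particular, if `f'` has a unique zero `t*`, then `L = t*`. -/
theorem fogm_limit_is_critical_point
    (f : ℝ → ℝ) (hdiff : Differentiable ℝ f) (hcont : Continuous (deriv f))
    (ρ α : ℝ) (hρ : 0 < ρ) (hα₁ : 1 < α) (hα₂ : α < 2)
    (t : ℕ → ℝ)
    (hrec : ∀ k : ℕ,
      t (k + 2) = t (k + 1) - ρ * deriv f (t (k + 1)) * |t (k + 1) - t k| ^ (1 - α))
    (hne : ∀ k : ℕ, t (k + 1) ≠ t k)
    (L : ℝ) (hL : Filter.Tendsto t Filter.atTop (nhds L)) :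
    deriv f L = 0 ∧
      ∀ ts : ℝ, ConvexOn ℝ Set.univ f → (∀ x : ℝ, deriv f x = 0 ↔ x = ts) → L = ts := by
  have ht1 : Filter.Tendsto (fun k => t (k + 1)) Filter.atTop (nhds L) :=
    hL.comp (Filter.tendsto_add_atTop_nat 1)
  have ht2 : Filter.Tendsto (fun k => t (k + 2)) Filter.atTop (nhds L) :=
    hL.comp (Filter.tendsto_add_atTop_nat 2)
  have hd0 : Filter.Tendsto (fun k => |t (k + 1) - t k|) Filter.atTop (nhds 0) := by
    have : Filter.Tendsto (fun k => t (k + 1) - t k) Filter.atTop (nhds (L - L)) :=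
      ht1.sub hL
    simpa using this.abs
  have hpow : Filter.Tendsto (fun k => |t (k + 1) - t k| ^ (α - 1)) Filter.atTop (nhds 0) := by
    have hc : ContinuousAt (fun x : ℝ => x ^ (α - 1)) 0 :=
      Real.continuousAt_rpow_const 0 (α - 1) (Or.inr (by linarith))
    have := hc.tendsto.comp hd0
    simpa [Function.comp_def, Real.zero_rpow (by linarith : α - 1 ≠ 0)] using this
  have key : ∀ k, ρ * deriv f (t (k + 1)) =
      (t (k + 1) - t (k + 2)) * |t (k + 1) - t k| ^ (α - 1) := by
    intro k
    have habs : |t (k + 1) - t k| ≠ 0 := by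
      simp [sub_eq_zero, hne k]
    have h1 : t (k + 1) - t (k + 2) = ρ * deriv f (t (k + 1)) * |t (k + 1) - t k| ^ (1 - α) := by
      rw [hrec k]; ring
    have hpos : (0:ℝ) < |t (k + 1) - t k| := (abs_nonneg _).lt_of_ne (Ne.symm habs)
    rw [h1, mul_assoc, ← Real.rpow_add hpos]
    norm_num
  have hmul : Filter.Tendsto (fun k => ρ * deriv f (t (k + 1))) Filter.atTop (nhds 0) := by
    have h : Filter.Tendsto (fun k => (t (k + 1) - t (k + 2)) * |t (k + 1) - t k| ^ (α - 1))
        Filter.atTop (nhds ((L - L) * 0)) := (ht1.sub ht2).mul hpow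
    simpa [key] using h
  have hfL : Filter.Tendsto (fun k => ρ * deriv f (t (k + 1))) Filter.atTop
      (nhds (ρ * deriv f L)) := (tendsto_const_nhds.mul ((hcont.tendsto L).comp ht1))
  have h0 : ρ * deriv f L = 0 := tendsto_nhds_unique hfL hmul
  have hderiv : deriv f L = 0 := by
    rcases mul_eq_zero.mp h0 with h | h
    · exact absurd h (ne_of_gt hρ)
    · exact h
  exact ⟨hderiv, fun ts _ hiff => (hiff L).mp hderiv⟩
end
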